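/- arXiv:2307.08039 — 2 statements merged into one kernel-verified Lean document; each statement's English description precedes it below -/
import Mathlib

section
/- Let G be a 2-connected graph and let Q be an ear of G in G ∪ Q (a nontrivial path whose endpoints lie in G but whose internal vertices do not). Then G ∪ Q is 2-connected. -/
open SimpleGraph

variable {V : Type}

/-- `C` is a cycle subgraph of `H`. -/
def IsCycleSub (H : SimpleGraph V) (C : H.Subgraph) : Prop :=
  ∃ (v : V) (w : H.Walk v v), w.IsCycle ∧ w.toSubgraph = C

/-- The set of cycle subgraphs of `H` containing the edge `e`. -/
def CyclesThrough (H : SimpleGraph V) (e : Sym2 V) : Set H.Subgraph :=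
  {C | IsCycleSub H C ∧ e ∈ C.edgeSet}

/-- A `k`-cactus: a connected graph in which each edge lies in at most `k` cycles. -/
def IsKCactus (H : SimpleGraph V) (k : ℕ) : Prop :=
  H.Connected ∧ ∀ e ∈ H.edgeSet, (CyclesThrough H e).ncard ≤ k

/-- A graph is 2-connected: at least 3 vertices, connected, and no cut-vertex. -/
def TwoConnected [Fintype V] (H : SimpleGraph V) : Prop :=
  3 ≤ Fintype.card V ∧ H.Connected ∧
    ∀ v : V, ((⊤ : H.Subgraph).deleteVerts {v}).coe.Connected

/-- A subgraph is 2-connected. -/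
def SubTwoConn {H : SimpleGraph V} (B : H.Subgraph) : Prop :=
  3 ≤ B.verts.ncard ∧ B.Connected ∧ ∀ v : V, (B.deleteVerts {v}).coe.Connected

/-- `Q` is an ear of `F` with end-vertices `a` and `b`: a nontrivial path whose
end-vertices lie in `F` but whose internal vertices (and edges) do not. -/
def IsEarWith {H : SimpleGraph V} (F Q : H.Subgraph) (a b : V) : Prop :=
  a ∈ F.verts ∧ b ∈ F.verts ∧
    ∃ p : H.Walk a b, p.IsPath ∧ 1 ≤ p.length ∧ p.toSubgraph = Q ∧
      (∀ w ∈ p.support, w ≠ a → w ≠ b → w ∉ F.verts) ∧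
      ∀ e ∈ p.edges, e ∉ F.edgeSet

/-- `Q` is an ear of `F`. -/
def IsEar {H : SimpleGraph V} (F Q : H.Subgraph) : Prop :=
  ∃ a b, IsEarWith F Q a b

/-- `A` is a `k`-theta subgraph with branch vertices `u` and `v`:
the union of `k` internally disjoint paths from `u` to `v`, at most one of length 1. -/
def IsThetaSubUV {H : SimpleGraph V} (A : H.Subgraph) (k : ℕ) (u v : V) : Prop :=
  u ≠ v ∧ ∃ p : Fin k → H.Walk u v,
    (∀ i, (p i).IsPath) ∧ (∀ i, 1 ≤ (p i).length) ∧
    (∀ i j, i ≠ j → ∀ w ∈ (p i).support, w ∈ (p j).support → w = u ∨ w = v) ∧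
    {i | (p i).length = 1}.Subsingleton ∧
    (⨆ i, (p i).toSubgraph) = A

/-- `A` is a `k`-theta subgraph. -/
def IsThetaSub {H : SimpleGraph V} (A : H.Subgraph) (k : ℕ) : Prop :=
  ∃ u v, IsThetaSubUV A k u v

/-- `G` is (as a whole graph) a `k`-theta graph. -/
def IsThetaGraph (G : SimpleGraph V) (k : ℕ) : Prop :=
  IsThetaSub (⊤ : G.Subgraph) k

/-- `B` is a `θ₃'`-subgraph: a theta graph together with an ear whose
end-vertices avoid the two branch (degree-3) vertices. -/
def IsThetaPrimeSub {H : SimpleGraph V} (B : H.Subgraph) : Prop :=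
  ∃ (A Q : H.Subgraph) (u v a b : V), IsThetaSubUV A 3 u v ∧ IsEarWith A Q a b ∧
    a ≠ u ∧ a ≠ v ∧ b ≠ u ∧ b ≠ v ∧ A ⊔ Q = B

/-- `G` is (as a whole graph) a `θ₃'`-graph. -/
def IsThetaPrimeGraph (G : SimpleGraph V) : Prop :=
  IsThetaPrimeSub (⊤ : G.Subgraph)

/-- The subgraph `B` has no cut-vertex. -/
def NoCutVtx {H : SimpleGraph V} (B : H.Subgraph) : Prop :=
  ∀ v : V, (B.deleteVerts {v}).coe.Preconnected

/-- `B` is a block of `H`: a maximal connected subgraph without a cut-vertex. -/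
def IsBlock (H : SimpleGraph V) (B : H.Subgraph) : Prop :=
  B.Connected ∧ NoCutVtx B ∧
    ∀ C : H.Subgraph, B ≤ C → C.Connected → NoCutVtx C → C = B

/-- `B` is a single-edge subgraph. -/
def IsSingleEdgeSub {H : SimpleGraph V} (B : H.Subgraph) : Prop :=
  ∃ (a b : V) (h : H.Adj a b), B = H.subgraphOfAdj h

/-- The set of cycle subgraphs of `H` lying inside `A` and containing the edge `e`. -/
def CyclesThroughIn (H : SimpleGraph V) (A : H.Subgraph) (e : Sym2 V) : Set H.Subgraph :=
  {C | IsCycleSub H C ∧ C ≤ A ∧ e ∈ C.edgeSet}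

/-- `[Q 0, Q 1, …, Q l]` is an ear decomposition of `H`. -/
def IsEarDecomp (H : SimpleGraph V) (l : ℕ) (Q : Fin (l + 1) → H.Subgraph) : Prop :=
  IsCycleSub H (Q 0) ∧
  (∀ i : Fin (l + 1), 0 < (i : ℕ) →
    IsEar (⨆ j : Fin (l + 1), ⨆ _ : j < i, Q j) (Q i)) ∧
  (∀ i j, i ≠ j → Disjoint (Q i).edgeSet (Q j).edgeSet) ∧
  (⨆ i, Q i) = ⊤

/-!
Deleting a vertex `v` from `A ⊔ Q` leaves `A - v`, which is connected, together with the
path `Q - v`. A path meets `v` at most once, so each remaining vertex of `Q` is joined inside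
`Q - v` to an end of `Q` other than `v`, and that end lies in `A - v`.
-/

namespace SimpleGraph

variable {H : SimpleGraph V}

namespace Subgraph

lemma le_deleteVerts {S T : H.Subgraph} {s : Set V} (hST : S ≤ T) (hs : Disjoint S.verts s) :
    S ≤ T.deleteVerts s :=
  induce_self_verts.ge.trans (induce_mono hST (Set.subset_sdiff.2 ⟨hST.1, hs⟩))

lemma Connected.of_forall_exists_walk {K S : H.Subgraph} (hK : K.Connected) (hKS : K ≤ S)
    (h : ∀ x ∈ S.verts, ∃ y ∈ K.verts, ∃ p : H.Walk x y, p.toSubgraph ≤ S) : S.Connected := by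
  rw [connected_iff_forall_exists_walk_subgraph]
  refine ⟨hK.nonempty.mono hKS.1, fun {u w} hu hw => ?_⟩
  obtain ⟨y, hy, p, hp⟩ := h u hu
  obtain ⟨z, hz, q, hq⟩ := h w hw
  obtain ⟨r, hr⟩ := (preconnected_iff_forall_exists_walk_subgraph K).1 hK.preconnected hy hz
  refine ⟨p.append (r.append q.reverse), ?_⟩
  simp only [Walk.toSubgraph_append, Walk.toSubgraph_reverse]
  exact sup_le hp (sup_le (hr.trans hKS) hq)

end Subgraph

namespace Walk

variable {a b x v : V} {p : H.Walk a b}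

lemma IsPath.notMem_support_takeUntil_or_dropUntil [DecidableEq V] (hp : p.IsPath)
    (hx : x ∈ p.support) (hvx : v ≠ x) :
    v ∉ (p.takeUntil x hx).support ∨ v ∉ (p.dropUntil x hx).support := by
  by_contra! ⟨hq, hr⟩
  have hnodup := hp.support_nodup
  rw [← p.take_spec hx, support_append] at hnodup
  rw [← cons_tail_support] at hr
  exact List.disjoint_of_nodup_append hnodup hq ((List.mem_cons.1 hr).resolve_left hvx)

lemma IsPath.exists_walk_toSubgraph_le_deleteVerts (hp : p.IsPath) (hx : x ∈ p.support)
    (hxv : x ≠ v) :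
    ∃ e ∈ ({a, b} : Set V), ∃ q : H.Walk x e, q.toSubgraph ≤ p.toSubgraph.deleteVerts {v} := by
  classical
  have hsplit : p.toSubgraph = (p.takeUntil x hx).toSubgraph ⊔ (p.dropUntil x hx).toSubgraph := by
    rw [← toSubgraph_append, take_spec]
  rcases hp.notMem_support_takeUntil_or_dropUntil hx hxv.symm with h | h
  · refine ⟨a, Or.inl rfl, (p.takeUntil x hx).reverse, ?_⟩
    rw [toSubgraph_reverse]
    refine Subgraph.le_deleteVerts (hsplit ▸ le_sup_left) ?_
    simpa [mem_verts_toSubgraph] using h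
  · refine ⟨b, Or.inr rfl, p.dropUntil x hx, ?_⟩
    refine Subgraph.le_deleteVerts (hsplit ▸ le_sup_right) ?_
    simpa [mem_verts_toSubgraph] using h

end Walk

end SimpleGraph

namespace SubTwoConn

variable {H : SimpleGraph V} {A : H.Subgraph} {a b : V} {p : H.Walk a b}

lemma three_le_ncard_sup_toSubgraph (hA : SubTwoConn A) :
    3 ≤ (A ⊔ p.toSubgraph).verts.ncard := by
  have hAfin : A.verts.Finite := Set.finite_of_ncard_pos (by linarith [hA.1])
  have hpfin : p.toSubgraph.verts.Finite := by
    rw [Walk.verts_toSubgraph]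
    exact p.support.finite_toSet
  exact hA.1.trans (Set.ncard_le_ncard Set.subset_union_left (hAfin.union hpfin))

lemma connected_deleteVerts_sup_toSubgraph (hA : SubTwoConn A) (ha : a ∈ A.verts)
    (hb : b ∈ A.verts) (hp : p.IsPath) (v : V) :
    ((A ⊔ p.toSubgraph).deleteVerts {v}).Connected := by
  refine Subgraph.Connected.of_forall_exists_walk ⟨hA.2.2 v⟩
    (Subgraph.deleteVerts_mono le_sup_left) fun x ⟨hx, hxv⟩ => ?_
  by_cases hxA : x ∈ A.verts
  · exact ⟨x, ⟨hxA, hxv⟩, Walk.nil, (singletonSubgraph_le_iff x _).2 ⟨hx, hxv⟩⟩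
  · have hxp : x ∈ p.support := by
      simpa [hxA, Walk.mem_verts_toSubgraph] using hx
    obtain ⟨e, he, q, hq⟩ := hp.exists_walk_toSubgraph_le_deleteVerts hxp hxv
    have heA : e ∈ A.verts := by rcases he with rfl | rfl <;> assumption
    exact ⟨e, ⟨heA, (hq.1 q.end_mem_verts_toSubgraph).2⟩, q,
      hq.trans (Subgraph.deleteVerts_mono le_sup_right)⟩

theorem sup_toSubgraph_of_isPath (hA : SubTwoConn A) (ha : a ∈ A.verts) (hb : b ∈ A.verts)
    (hp : p.IsPath) : SubTwoConn (A ⊔ p.toSubgraph) :=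
  ⟨hA.three_le_ncard_sup_toSubgraph,
    Subgraph.connected_sup hA.2.1.preconnected p.toSubgraph_connected.preconnected
      ⟨a, ha, p.start_mem_verts_toSubgraph⟩,
    fun v => (hA.connected_deleteVerts_sup_toSubgraph ha hb hp v).coe⟩

end SubTwoConn

/-- Adding an ear to a 2-connected graph yields a 2-connected graph. -/
theorem ear_union_twoConnected (H : SimpleGraph V) (A Q : H.Subgraph)
    (hA : SubTwoConn A) (hQ : IsEar A Q) :
    SubTwoConn (A ⊔ Q) := by
  obtain ⟨a, b, ha, hb, p, hp, -, rfl, -⟩ := hQ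
  exact hA.sup_toSubgraph_of_isPath ha hb hp
end

section
/- Let G be a 2-connected graph, let uv be an edge of G contained in exactly k cycles of G, and let Q be an ear of G in G ∪ Q. Then uv is contained in at least k+1 cycles in G ∪ Q. -/
open SimpleGraph

variable {V : Type}

/-!
The ear `Q`, a path from `a` to `b` whose interior avoids `A`, closes every `a`–`b` path of `A`
into a cycle of `A ⊔ Q` that is not contained in `A`. So it suffices to find an `a`–`b` path of `A`
through `uv`.

In a 2-connected graph every edge lies on a cycle, and a cycle through `uv` can be moved, one edge
at a time, to pass through any given vertex: if `w` is adjacent to a vertex `w'` of the cycle, a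
path from `w` to the cycle avoiding `w'`, together with the arc from `w'` that contains `uv`, is a
`w'`–`w` path through `uv`, which the edge `ww'` closes into a cycle. The same arc-and-path
construction applied to a cycle through `uv` and `a` gives the required `a`–`b` path.
-/

namespace SimpleGraph

variable {H : SimpleGraph V} {u v w x y z : V}

namespace Walk

lemma toSubgraph_takeUntil_le [DecidableEq V] (p : H.Walk u v) (h : w ∈ p.support) :
    (p.takeUntil w h).toSubgraph ≤ p.toSubgraph :=
  calc _ ≤ ((p.takeUntil w h).append (p.dropUntil w h)).toSubgraph := by
        rw [toSubgraph_append]; exact le_sup_left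
    _ = _ := by rw [take_spec]

lemma toSubgraph_dropUntil_le [DecidableEq V] (p : H.Walk u v) (h : w ∈ p.support) :
    (p.dropUntil w h).toSubgraph ≤ p.toSubgraph :=
  calc _ ≤ ((p.takeUntil w h).append (p.dropUntil w h)).toSubgraph := by
        rw [toSubgraph_append]; exact le_sup_right
    _ = _ := by rw [take_spec]

lemma mem_edges_of_length_eq_one {p : H.Walk u v} (h : p.length = 1) : s(u, v) ∈ p.edges := by
  rcases p with _ | ⟨_, _ | ⟨_, q⟩⟩ <;> simp_all

lemma IsPath.start_notMem_support_tail {p : H.Walk u v} (hp : p.IsPath) : u ∉ p.support.tail :=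
  (List.nodup_cons.1 (p.cons_tail_support ▸ hp.support_nodup)).1

lemma IsPath.append_of_forall_mem_support {p : H.Walk u v} {q : H.Walk v w} (hp : p.IsPath)
    (hq : q.IsPath) (h : ∀ x ∈ p.support, x ∈ q.support → x = v) : (p.append q).IsPath := by
  rw [isPath_def, support_append, List.nodup_append]
  refine ⟨hp.support_nodup, hq.support_nodup.sublist (List.tail_sublist _), ?_⟩
  rintro x hxp y hyq rfl
  exact hq.start_notMem_support_tail (h x hxp (List.mem_of_mem_tail hyq) ▸ hyq)

lemma IsCycle.exists_isPath_mem_edges [DecidableEq V] {c : H.Walk u u} (hc : c.IsCycle)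
    (hv : v ∈ c.support) (hvu : v ≠ u) {e : Sym2 V} (he : e ∈ c.edges) :
    ∃ p : H.Walk u v, p.IsPath ∧ p.toSubgraph ≤ c.toSubgraph ∧ e ∈ p.edges := by
  have he' : e ∈ (c.takeUntil v hv).edges ++ (c.dropUntil v hv).edges := by
    rwa [← edges_append, take_spec]
  rcases List.mem_append.1 he' with he | he
  · exact ⟨_, hc.isPath_takeUntil hv, toSubgraph_takeUntil_le c hv, he⟩
  · have hdrop : (c.dropUntil v hv).IsPath :=
      IsCycle.isPath_of_append_right (p := c.takeUntil v hv) (not_nil_of_ne hvu.symm)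
        (by rwa [take_spec])
    refine ⟨_, hdrop.reverse, ?_, by rwa [edges_reverse, List.mem_reverse]⟩
    rw [toSubgraph_reverse]
    exact toSubgraph_dropUntil_le c hv

end Walk

namespace Subgraph

open Walk

variable {A : H.Subgraph}

lemma finite_setOf_le {B : H.Subgraph} (hB : B.verts.Finite) : {C : H.Subgraph | C ≤ B}.Finite := by
  have hinj : Function.Injective fun C : H.Subgraph => (C.verts, {p : V × V | C.Adj p.1 p.2}) := by
    intro C C' h
    simp only [Prod.mk.injEq, Set.ext_iff, Set.mem_ofPred_eq] at h
    ext x y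
    · exact h.1 x
    · exact h.2 (x, y)
  refine Set.Finite.of_finite_image ?_ hinj.injOn
  refine (hB.finite_subsets.prod (hB.prod hB).finite_subsets).subset ?_
  rintro _ ⟨C, hCB, rfl⟩
  exact ⟨hCB.1, fun p hp => ⟨B.edge_vert (hCB.2 hp), B.edge_vert (hCB.2 hp).symm⟩⟩

lemma Preconnected.exists_isPath (hA : A.Preconnected) (hx : x ∈ A.verts) (hy : y ∈ A.verts) :
    ∃ p : H.Walk x y, p.IsPath ∧ p.toSubgraph ≤ A := by
  classical
  obtain ⟨p, hp⟩ := (preconnected_iff_forall_exists_walk_subgraph A).1 hA hx hy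
  exact ⟨p.bypass, p.bypass_isPath, toSubgraph_bypass_le_toSubgraph.trans hp⟩

lemma Preconnected.exists_isPath_notMem_support (hA : (A.deleteVerts {x}).Preconnected)
    (hy : y ∈ A.verts) (hz : z ∈ A.verts) (hyx : y ≠ x) (hzx : z ≠ x) :
    ∃ p : H.Walk y z, p.IsPath ∧ p.toSubgraph ≤ A ∧ x ∉ p.support := by
  obtain ⟨p, hp, hpA⟩ := hA.exists_isPath (x := y) (y := z) (by simp [hy, hyx]) (by simp [hz, hzx])
  refine ⟨p, hp, hpA.trans deleteVerts_le, fun hx => ?_⟩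
  simpa using hpA.1 ((mem_verts_toSubgraph p).2 hx)

lemma exists_mem_verts_ne_ne (hcard : 3 ≤ A.verts.ncard) (u v : V) :
    ∃ z ∈ A.verts, z ≠ u ∧ z ≠ v := by
  have hlt : ({u, v} : Set V).ncard < A.verts.ncard :=
    (Set.ncard_insert_le u {v}).trans_lt (by rw [Set.ncard_singleton]; omega)
  obtain ⟨z, hz, hzuv⟩ := Set.exists_mem_notMem_of_ncard_lt_ncard hlt
  exact ⟨z, hz, fun h => hzuv (by simp [h]), fun h => hzuv (by simp [h])⟩

lemma exists_isCycle_mem_edges (hcard : 3 ≤ A.verts.ncard)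
    (hdel : ∀ x, (A.deleteVerts {x}).Preconnected) (huv : s(u, v) ∈ A.edgeSet) :
    ∃ c : H.Walk u u, c.IsCycle ∧ c.toSubgraph ≤ A ∧ s(u, v) ∈ c.edges := by
  -- The cycle is `u → w ⇝ v → u`, where `w ≠ v` is a neighbour of `u` found on a path avoiding
  -- `v`, and `w ⇝ v` avoids `u`.
  have huv' : A.Adj u v := huv
  obtain ⟨z, hz, hzu, hzv⟩ := exists_mem_verts_ne_ne hcard u v
  obtain ⟨p, -, hpA, hvp⟩ :=
    (hdel v).exists_isPath_notMem_support (A.edge_vert huv') hz huv'.ne hzv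
  have hpnil : ¬ p.Nil := not_nil_of_ne hzu.symm
  have huw : A.Adj u p.snd := hpA.2 (p.toSubgraph_adj_snd hpnil)
  have hwv : p.snd ≠ v := fun h => hvp (h ▸ List.mem_of_mem_tail (p.snd_mem_tail_support hpnil))
  obtain ⟨q, hq, hqA, huq⟩ := (hdel u).exists_isPath_notMem_support (A.edge_vert huw.symm)
    (A.edge_vert huv'.symm) huw.ne.symm huv'.ne.symm
  refine ⟨(cons (A.adj_sub huw) q).append (A.adj_sub huv').symm.toWalk, ?_, ?_, ?_⟩
  · refine (hq.cons huq).isCycle_append (by simp [huv'.ne.symm]) (by simp [huq]) (Or.inl ?_)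
    have : 0 < q.length := not_nil_iff_lt_length.1 (not_nil_of_ne hwv)
    rw [length_cons]; omega
  · simpa [toSubgraph_append] using ⟨huw, hqA, huv'.symm⟩
  · simp

lemma exists_isPath_mem_edges_of_isCycle (hdel : (A.deleteVerts {x}).Preconnected)
    {c : H.Walk x x} (hc : c.IsCycle) (hcA : c.toSubgraph ≤ A) {e : Sym2 V} (he : e ∈ c.edges)
    (hy : y ∈ A.verts) (hyx : y ≠ x) :
    ∃ r : H.Walk x y, r.IsPath ∧ r.toSubgraph ≤ A ∧ e ∈ r.edges := by
  classical
  -- Walk from `y` towards the cycle avoiding `x`, stop at the first vertex `z` on the cycle, and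
  -- prepend the arc of the cycle from `x` to `z` that contains `e`.
  have hcnil : ¬ c.Nil := hc.not_nil
  have hsnd : c.snd ∈ c.support := List.mem_of_mem_tail (c.snd_mem_tail_support hcnil)
  have hsndA : c.snd ∈ A.verts := hcA.1 ((mem_verts_toSubgraph c).2 hsnd)
  obtain ⟨p, hp, hpA, hxp⟩ :=
    hdel.exists_isPath_notMem_support hy hsndA hyx (c.adj_snd hcnil).ne.symm
  obtain ⟨z, hzc, hzp, hfirst⟩ := p.exists_mem_support_forall_mem_support_imp_eq
    c.support.toFinset ⟨c.snd, by simp [hsnd]⟩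
  rw [List.mem_toFinset] at hzc
  have hzx : z ≠ x := fun h => hxp (h ▸ hzp)
  obtain ⟨R, hR, hRc, heR⟩ := hc.exists_isPath_mem_edges hzc hzx he
  refine ⟨R.append (p.takeUntil z hzp).reverse, ?_, ?_, by simp [heR]⟩
  · refine hR.append_of_forall_mem_support (hp.takeUntil hzp).reverse fun w hwR hwp => ?_
    rw [support_reverse, List.mem_reverse] at hwp
    have hwc : w ∈ c.support := (mem_verts_toSubgraph c).1 (hRc.1 ((mem_verts_toSubgraph R).2 hwR))
    exact hfirst w (List.mem_toFinset.2 hwc) hwp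
  · rw [toSubgraph_append, toSubgraph_reverse]
    exact sup_le (hRc.trans hcA) ((p.toSubgraph_takeUntil_le hzp).trans hpA)

lemma exists_isCycle_mem_edges_of_adj (hdel : (A.deleteVerts {w}).Preconnected) (hA : A.Adj v w)
    {c : H.Walk w w} (hc : c.IsCycle) (hcA : c.toSubgraph ≤ A) {e : Sym2 V} (he : e ∈ c.edges) :
    ∃ c : H.Walk v v, c.IsCycle ∧ c.toSubgraph ≤ A ∧ e ∈ c.edges := by
  classical
  by_cases hvc : v ∈ c.support
  · exact ⟨c.rotate v hvc, hc.rotate hvc, by rwa [toSubgraph_rotate],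
      (c.rotate_edges v hvc).perm.mem_iff.2 he⟩
  obtain ⟨p, hp, hpA, hep⟩ :=
    exists_isPath_mem_edges_of_isCycle hdel hc hcA he (A.edge_vert hA) hA.ne
  refine ⟨cons (A.adj_sub hA) p, (cons_isCycle_iff p _).2 ⟨hp, fun hvp => hvc ?_⟩, ?_,
    List.mem_cons_of_mem _ hep⟩
  · rw [hp.eq_adj_toWalk_of_mem_edges (Sym2.eq_swap ▸ hvp)] at hep
    simp only [edges_cons, edges_nil, List.mem_singleton] at hep
    exact c.snd_mem_support_of_mem_edges (hep ▸ he)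
  · rw [Walk.toSubgraph, sup_le_iff]
    exact ⟨subgraphOfAdj_le_of_adj A hA, hpA⟩

lemma exists_isCycle_mem_edges_of_walk (hdel : ∀ x, (A.deleteVerts {x}).Preconnected)
    (q : H.Walk v w) (hqA : q.toSubgraph ≤ A) {c : H.Walk w w} (hc : c.IsCycle)
    (hcA : c.toSubgraph ≤ A) {e : Sym2 V} (he : e ∈ c.edges) :
    ∃ c : H.Walk v v, c.IsCycle ∧ c.toSubgraph ≤ A ∧ e ∈ c.edges := by
  induction q with
  | nil => exact ⟨c, hc, hcA, he⟩
  | cons hadj q ih =>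
    rw [Walk.toSubgraph, sup_le_iff] at hqA
    obtain ⟨c', hc', hc'A, he'⟩ := ih hqA.2 hc hcA he
    exact exists_isCycle_mem_edges_of_adj (hdel _) (hqA.1.2 (by simp)) hc' hc'A he'

lemma exists_isCycle_mem_edges_of_mem_verts (hcard : 3 ≤ A.verts.ncard) (hconn : A.Preconnected)
    (hdel : ∀ x, (A.deleteVerts {x}).Preconnected) (huv : s(u, v) ∈ A.edgeSet)
    (hw : w ∈ A.verts) :
    ∃ c : H.Walk w w, c.IsCycle ∧ c.toSubgraph ≤ A ∧ s(u, v) ∈ c.edges := by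
  obtain ⟨q, hqA⟩ := (preconnected_iff_forall_exists_walk_subgraph A).1 hconn hw (A.edge_vert huv)
  obtain ⟨c, hc, hcA, he⟩ := exists_isCycle_mem_edges hcard hdel huv
  exact exists_isCycle_mem_edges_of_walk hdel q hqA hc hcA he

lemma exists_isPath_mem_edges (hcard : 3 ≤ A.verts.ncard) (hconn : A.Preconnected)
    (hdel : ∀ x, (A.deleteVerts {x}).Preconnected) (huv : s(u, v) ∈ A.edgeSet)
    (hx : x ∈ A.verts) (hy : y ∈ A.verts) (hxy : x ≠ y) :
    ∃ r : H.Walk x y, r.IsPath ∧ r.toSubgraph ≤ A ∧ s(u, v) ∈ r.edges := by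
  obtain ⟨c, hc, hcA, he⟩ := exists_isCycle_mem_edges_of_mem_verts hcard hconn hdel huv hx
  exact exists_isPath_mem_edges_of_isCycle (hdel x) hc hcA he hy hxy.symm

end Subgraph

end SimpleGraph

section Ear

variable {H : SimpleGraph V} {A Q : H.Subgraph} {a b : V}

lemma IsEarWith.ne (hQ : IsEarWith A Q a b) : a ≠ b := by
  obtain ⟨-, -, p, hp, hlen, -⟩ := hQ
  rintro rfl
  exact Walk.not_nil_iff_lt_length.2 hlen (Walk.isPath_iff_nil.1 hp)

lemma IsEarWith.finite_verts (hQ : IsEarWith A Q a b) : Q.verts.Finite := by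
  obtain ⟨-, -, p, -, -, rfl, -⟩ := hQ
  rw [Walk.verts_toSubgraph]
  exact p.support.finite_toSet

lemma IsEarWith.exists_isCycleSub (hQ : IsEarWith A Q a b) {r : H.Walk a b} (hr : r.IsPath)
    (hrA : r.toSubgraph ≤ A) :
    ∃ C, IsCycleSub H C ∧ r.toSubgraph ≤ C ∧ C ≤ A ⊔ Q ∧ ¬ C ≤ A := by
  have hab := hQ.ne
  obtain ⟨-, -, p, hp, hlen, rfl, hint, hedges⟩ := hQ
  have hpnil : ¬ p.Nil := Walk.not_nil_iff_lt_length.2 hlen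
  have hcyc : (r.append p.reverse).IsCycle := by
    refine hr.isCycle_append hp.reverse (fun y hyr hyp => ?_) ?_
    · have hyA : y ∈ A.verts := hrA.1 ((r.mem_verts_toSubgraph).2 (List.mem_of_mem_tail hyr))
      have hyp' : y ∈ p.support := by
        simpa using List.mem_of_mem_tail hyp
      exact hint y hyp' (fun h => hr.start_notMem_support_tail (h ▸ hyr))
        (fun h => hp.reverse.start_notMem_support_tail (h ▸ hyp)) hyA
    · by_contra! hle
      have hr1 : r.length = 1 := by
        have := Walk.not_nil_iff_lt_length.1 (Walk.not_nil_of_ne (p := r) hab); omega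
      have hp1 : p.length = 1 := by
        rw [Walk.length_reverse] at hle; omega
      exact hedges _ (Walk.mem_edges_of_length_eq_one hp1) (Subgraph.edgeSet_mono hrA
        ((r.mem_edges_toSubgraph).2 (Walk.mem_edges_of_length_eq_one hr1)))
  refine ⟨_, ⟨a, _, hcyc, rfl⟩, ?_, ?_, fun hle => ?_⟩
  · rw [Walk.toSubgraph_append]; exact le_sup_left
  · rw [Walk.toSubgraph_append, Walk.toSubgraph_reverse]; exact sup_le_sup_right hrA _
  · have hap := p.mk_start_snd_mem_edges hpnil
    refine hedges _ hap (Subgraph.edgeSet_mono hle ?_)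
    simp [hap]

lemma cyclesThroughIn_mono {B B' : H.Subgraph} (h : B ≤ B') (e : Sym2 V) :
    CyclesThroughIn H B e ⊆ CyclesThroughIn H B' e :=
  fun _ ⟨hC, hCB, he⟩ => ⟨hC, hCB.trans h, he⟩

end Ear

/-- If the edge `uv` of a 2-connected graph `A` lies in exactly `k` cycles of `A`
and `Q` is an ear of `A`, then `uv` lies in at least `k + 1` cycles of `A ⊔ Q`. -/
theorem ear_increases_cycles (H : SimpleGraph V) (A Q : H.Subgraph)
    (hA : SubTwoConn A) (u v : V) (huv : s(u, v) ∈ A.edgeSet) (k : ℕ)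
    (hk : (CyclesThroughIn H A s(u, v)).ncard = k)
    (hQ : IsEar A Q) :
    k + 1 ≤ (CyclesThroughIn H (A ⊔ Q) s(u, v)).ncard := by
  obtain ⟨hcard, hconn, hdel⟩ := hA
  obtain ⟨a, b, hQ⟩ := hQ
  obtain ⟨r, hr, hrA, hre⟩ := Subgraph.exists_isPath_mem_edges hcard hconn.preconnected
    (fun x => ⟨(hdel x).preconnected⟩) huv hQ.1 hQ.2.1 hQ.ne
  obtain ⟨C, hC, hrC, hCAQ, hCA⟩ := hQ.exists_isCycleSub hr hrA
  have hC_mem : C ∈ CyclesThroughIn H (A ⊔ Q) s(u, v) :=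
    ⟨hC, hCAQ, Subgraph.edgeSet_mono hrC ((Walk.mem_edges_toSubgraph r).2 hre)⟩
  have hlt : CyclesThroughIn H A s(u, v) ⊂ CyclesThroughIn H (A ⊔ Q) s(u, v) :=
    (Set.ssubset_iff_of_subset (cyclesThroughIn_mono le_sup_left _)).2
      ⟨C, hC_mem, fun h => hCA h.2.1⟩
  have hfin : (A ⊔ Q).verts.Finite :=
    (Set.finite_of_ncard_pos (by omega)).union hQ.finite_verts
  exact hk ▸ Set.ncard_lt_ncard hlt ((Subgraph.finite_setOf_le hfin).subset fun _ hC => hC.2.1)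
end
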